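/- Let d ≥ 2 and let A be an invertible real d×d matrix such that |∏_{j=1}^d (A·m)_j| ≥ 1 for every m ∈ ℤ^d with m ≠ 0, and such that every axis-parallel box P ⊂ ℝ^d contains at most vol(P) + 1 points of the lattice {A·m : m ∈ ℤ^d}. Then there exists a constant C(A,d) > 0 such that for every a > 1 the Frolov point set satisfies disp(𝓕(a,A)) ≤ C(A,d)·a^{−d}. -/

import Mathlib

/-- The dispersion of a set T ⊆ [0,1)^d (or [0,1]^d): the supremum of volumes of
axis-parallel boxes prod_j [x_j, y_j) ⊆ [0,1)^d containing no point of T. -/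
noncomputable def disp (d : ℕ) (T : Set (Fin d → ℝ)) : ℝ :=
  sSup {V : ℝ | ∃ x y : Fin d → ℝ,
    (∀ j, 0 ≤ x j ∧ x j ≤ y j ∧ y j ≤ 1) ∧
    (∀ t ∈ T, ∃ j, t j < x j ∨ y j ≤ t j) ∧
    V = ∏ j, (y j - x j)}

/-- The Frolov point set F(a,A) = {a^{-1} (A^{-1})^T m : m in Z^d} ∩ [0,1]^d. -/
noncomputable def FrolovSet (d : ℕ) (a : ℝ) (A : Matrix (Fin d) (Fin d) ℝ) :
    Set (Fin d → ℝ) :=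
  {x | (∃ m : Fin d → ℤ, x = a⁻¹ • (A⁻¹).transpose.mulVec (fun i => (m i : ℝ))) ∧
    ∀ j, x j ∈ Set.Icc (0 : ℝ) 1}

/-!
The Frolov lattice `a⁻¹ (A⁻¹)ᵀ ℤᵈ` is, up to the factor `a`, the dual of `A ℤᵈ`. Rescale
coordinate `i` by `2κ / lᵢ`, where the `lᵢ` are the side lengths of an empty box. A nonzero dual
vector `a A z` of the rescaled lattice then has `ℓ¹`-norm at least
`(a / 2κ) · maxᵢ lᵢ |(A z)ᵢ| ≥ (a / 2κ) (∏ lᵢ)^{1/d}`, since `|∏ (A z)ᵢ| ≥ 1`. This is at least `1`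
as soon as `∏ lᵢ ≥ (2κ / a)ᵈ`.

A transference theorem says that a lattice whose dual has no nonzero vector of `ℓ¹`-norm `< 1`
meets every `ℓ∞`-ball of radius `K_d`. With `κ > K_d`, the rescaled box (a cube of half-width `κ`)
then contains a lattice point, and this contradicts emptiness, so `disp ≤ (2κ)ᵈ / aᵈ`.

The transference theorem is proved by induction on the dimension. Minkowski's theorem, applied
to the dual, bounds `|det B|`. Applied to the lattice itself, it gives a short lattice vector,
which by the Smith normal form is a multiple of a lattice basis vector `v`. Projecting along `v`
onto the coordinates other than the largest one of `v` gives a lattice of one dimension less whose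
dual, after halving, is again `ℓ¹`-separated. A lattice point close to a projected target lifts to
a point close to the target after rounding along `v`.
-/

open Matrix

theorem Module.Basis.exists_basis_eq_smul {R M ι : Type*} [CommRing R] [IsDomain R]
    [IsPrincipalIdealRing R] [AddCommGroup M] [Module R M] [Fintype ι] (b₀ : Module.Basis ι R M)
    {m : M} (hm : m ≠ 0) (i : ι) : ∃ (b : Module.Basis ι R M) (g : R), m = g • b i := by
  classical
  -- `R ∙ m` has rank one, so its Smith normal form relative to `b₀` puts `m` on a basis vector
  obtain ⟨n, snf⟩ := (Submodule.span R {m}).smithNormalForm b₀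
  have hm_sum := congrArg Subtype.val
    (snf.bN.sum_repr ⟨m, Submodule.mem_span_singleton_self m⟩)
  have hn : n ≤ 1 := by
    simpa [Module.finrank_eq_card_basis snf.bN] using
      finrank_span_le_card (R := R) ({m} : Set M)
  interval_cases n
  · simp at hm_sum
    exact absurd hm_sum.symm hm
  · simp only [Fin.sum_univ_one, Submodule.coe_smul, snf.snf, smul_smul] at hm_sum
    generalize snf.bN.repr _ 0 * snf.a 0 = g at hm_sum
    refine ⟨snf.bM.reindex (Equiv.swap (snf.f 0) i), g, ?_⟩
    rw [Module.Basis.reindex_apply, Equiv.symm_swap, Equiv.swap_apply_right, hm_sum]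

open MeasureTheory in
theorem exists_ne_zero_abs_mulVec_le_of_abs_det_lt {d : ℕ} (M : Matrix (Fin d) (Fin d) ℝ)
    (hM : IsUnit M.det) {ρ : ℝ} (hρ : 0 < ρ) (hdet : |M.det| < ρ ^ d) :
    ∃ m : Fin d → ℤ, m ≠ 0 ∧ ∀ i, |(M *ᵥ fun k => (m k : ℝ)) i| ≤ ρ := by
  let b := (Pi.basisFun ℝ (Fin d)).map (M.toLinearEquiv' (M.invertibleOfIsUnitDet hM))
  have hb : ∀ c : Fin d → ℤ, ∑ k, c k • b k = M *ᵥ fun k => (c k : ℝ) := by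
    intro c
    ext i
    simp [b, Matrix.toLinearEquiv', Matrix.mulVec_single, mulVec_apply_eq_sum, mul_comm]
  have : Countable (Submodule.span ℤ (Set.range b)).toAddSubgroup :=
    inferInstanceAs (Countable (Submodule.span ℤ (Set.range b)))
  let s : Set (Fin d → ℝ) := Set.univ.pi fun _ => Set.Icc (-ρ) ρ
  have h_symm : ∀ x ∈ s, -x ∈ s := fun x hx i _ =>
    ⟨neg_le_neg (hx i trivial).2, neg_le.mpr (hx i trivial).1⟩
  have hvol : volume (ZSpan.fundamentalDomain b) * 2 ^ Module.finrank ℝ (Fin d → ℝ) <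
      volume s := by
    have hb_mat : Matrix.of b = Mᵀ := by
      ext i j
      simp [b, Matrix.toLinearEquiv', Matrix.mulVec_single]
    rw [ZSpan.volume_fundamentalDomain, hb_mat, det_transpose, volume_pi_pi]
    simp only [Real.volume_Icc, Finset.prod_const, Finset.card_univ, Fintype.card_fin,
      Module.finrank_fintype_fun_eq_card]
    rw [← ENNReal.ofReal_ofNat, ← ENNReal.ofReal_pow (by norm_num),
      ← ENNReal.ofReal_mul (abs_nonneg _), ← ENNReal.ofReal_pow (by linarith)]
    refine (ENNReal.ofReal_lt_ofReal_iff (pow_pos (by linarith) _)).mpr ?_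
    calc |M.det| * 2 ^ d < ρ ^ d * 2 ^ d := by gcongr
      _ = (ρ - -ρ) ^ d := by ring
  obtain ⟨⟨x, hxL⟩, hx0, hxs⟩ := exists_ne_zero_mem_lattice_of_measure_mul_two_pow_lt_measure
    (ZSpan.isAddFundamentalDomain' b volume) h_symm (convex_pi fun _ _ => convex_Icc _ _) hvol
  obtain ⟨c, rfl⟩ := (Submodule.mem_span_range_iff_exists_fun ℤ).mp hxL
  refine ⟨c, fun hc => hx0 (by simp [hc]), fun i => ?_⟩
  rw [← hb]
  exact abs_le.mpr (hxs i trivial)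

/-- `u ᵥ* B ∈ ℤⁿ` says that `u` lies in the dual lattice of `B ℤⁿ`. -/
def DualL1Separated {n : ℕ} (B : Matrix (Fin n) (Fin n) ℝ) : Prop :=
  ∀ u : Fin n → ℝ, u ≠ 0 → ∀ z : Fin n → ℤ, (u ᵥ* B = fun k => (z k : ℝ)) → 1 ≤ ∑ i, |u i|

namespace DualL1Separated

variable {n : ℕ} {B : Matrix (Fin n) (Fin n) ℝ}

theorem det_ne_zero (hB : DualL1Separated B) : B.det ≠ 0 := by
  intro h0
  obtain ⟨v, hv0, hv⟩ := exists_vecMul_eq_zero_iff.mpr h0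
  have hS : 0 < ∑ i, |v i| := by
    obtain ⟨i, hi⟩ := Function.ne_iff.mp hv0
    exact Finset.sum_pos' (fun i _ => abs_nonneg _) ⟨i, Finset.mem_univ _, abs_pos.mpr hi⟩
  have h := hB ((2 * ∑ i, |v i|)⁻¹ • v) (by simp [hv0, hS.ne']) 0
    (by ext k; simp [Matrix.smul_vecMul, hv])
  simp only [Pi.smul_apply, smul_eq_mul, abs_mul, ← Finset.mul_sum] at h
  rw [abs_of_pos (by positivity), mul_inv, mul_assoc, inv_mul_cancel₀ hS.ne'] at h
  norm_num at h

theorem abs_det_le (hB : DualL1Separated B) : |B.det| ≤ (2 * n) ^ n := by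
  by_contra! hlt
  have hn : n ≠ 0 := by rintro rfl; simp at hlt
  have hBt : IsUnit Bᵀ.det := by simpa using hB.det_ne_zero
  -- Minkowski's theorem for the dual lattice `(Bᵀ)⁻¹ ℤⁿ`, whose determinant is small
  obtain ⟨c, hc0, hc⟩ := exists_ne_zero_abs_mulVec_le_of_abs_det_lt (Bᵀ)⁻¹
    (isUnit_nonsing_inv_det _ hBt) (ρ := (2 * n)⁻¹) (by positivity) (by
      rw [det_nonsing_inv, Ring.inverse_eq_inv, det_transpose, abs_inv, inv_pow]
      exact inv_strictAnti₀ (by positivity) hlt)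
  set u := (Bᵀ)⁻¹ *ᵥ fun k => (c k : ℝ)
  have hu : u ᵥ* B = fun k => (c k : ℝ) := by
    rw [← mulVec_transpose, mulVec_mulVec, mul_nonsing_inv _ hBt, one_mulVec]
  have hu0 : u ≠ 0 := by
    rintro h
    refine hc0 (funext fun k => ?_)
    simpa [h] using (congrFun hu k).symm
  have h1 := hB u hu0 c hu
  have h2 : ∑ i, |u i| ≤ 2⁻¹ := calc
    ∑ i, |u i| ≤ ∑ _i : Fin n, (2 * (n : ℝ))⁻¹ := Finset.sum_le_sum fun i _ => hc i
    _ = 2⁻¹ := by simp; field_simp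
  linarith

theorem exists_ne_zero_abs_mulVec_le (hB : DualL1Separated B) (hn : 0 < n) :
    ∃ m : Fin n → ℤ, m ≠ 0 ∧ ∀ i, |(B *ᵥ fun k => (m k : ℝ)) i| ≤ 3 * n :=
  exists_ne_zero_abs_mulVec_le_of_abs_det_lt B (isUnit_iff_ne_zero.mpr hB.det_ne_zero)
    (by positivity) (hB.abs_det_le.trans_lt <| by gcongr; linarith [show (0 : ℝ) < n by positivity])

theorem mul_map_intCast (hB : DualL1Separated B) {U V : Matrix (Fin n) (Fin n) ℤ}
    (hUV : U * V = 1) : DualL1Separated (B * U.map (↑)) := by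
  intro u hu z hz
  refine hB u hu (z ᵥ* V) ?_
  have hUV' : U.map (Int.cast : ℤ → ℝ) * V.map (↑) = 1 := by
    have := congrArg (Int.castRingHom ℝ).mapMatrix hUV
    rwa [map_mul, map_one] at this
  ext k
  rw [← vecMul_one (u ᵥ* B), ← hUV', ← vecMul_vecMul, vecMul_vecMul u B, hz]
  exact (RingHom.map_vecMul (Int.castRingHom ℝ) V z k).symm

end DualL1Separated

section Elimination

variable {n : ℕ}

/-- The projection along `w` onto the coordinates other than `j`; it kills `w` when `w j ≠ 0`. -/
noncomputable def projectAlong (w : Fin (n + 1) → ℝ) (j : Fin (n + 1)) (y : Fin (n + 1) → ℝ) :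
    Fin n → ℝ :=
  fun r => y (j.succAbove r) - w (j.succAbove r) / w j * y j

/-- Gaussian elimination of column `0` of `M` with pivot `M j 0`: the columns `1, …, n` projected
along column `0`. -/
noncomputable def eliminate (M : Matrix (Fin (n + 1)) (Fin (n + 1)) ℝ) (j : Fin (n + 1)) :
    Matrix (Fin n) (Fin n) ℝ :=
  of fun r c => projectAlong (fun i => M i 0) j (fun i => M i c.succ) r

theorem projectAlong_mulVec_cons {M : Matrix (Fin (n + 1)) (Fin (n + 1)) ℝ} {j : Fin (n + 1)}
    (hj : M j 0 ≠ 0) (t : ℝ) (v : Fin n → ℝ) :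
    projectAlong (fun i => M i 0) j (M *ᵥ Fin.cons t v) = eliminate M j *ᵥ v := by
  ext r
  simp only [projectAlong, eliminate, mulVec_apply_eq_sum, Fin.sum_univ_succ, Fin.cons_zero,
    Fin.cons_succ, of_apply, sub_mul, Finset.sum_sub_distrib, mul_assoc, ← Finset.mul_sum]
  field_simp
  ring

theorem insertNth_vecMul_eq_cons {M : Matrix (Fin (n + 1)) (Fin (n + 1)) ℝ} {j : Fin (n + 1)}
    (hj : M j 0 ≠ 0) (u : Fin n → ℝ) :
    j.insertNth (-(∑ r, u r * M (j.succAbove r) 0) / M j 0) u ᵥ* M =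
      Fin.cons 0 (u ᵥ* eliminate M j) := by
  ext c
  refine Fin.cases ?_ (fun c => ?_) c
  · simp [vecMul_apply_eq_sum, Fin.sum_univ_succAbove _ j, hj]
  · simp only [vecMul_apply_eq_sum, Fin.sum_univ_succAbove _ j, Fin.insertNth_apply_same,
      Fin.insertNth_apply_succAbove, Fin.cons_succ, eliminate, projectAlong, of_apply, mul_sub,
      Finset.sum_sub_distrib, neg_div, neg_mul, Finset.sum_div, Finset.sum_mul]
    rw [neg_add_eq_sub]
    exact congrArg _ (Finset.sum_congr rfl fun r _ => by ring)

theorem DualL1Separated.eliminate {M : Matrix (Fin (n + 1)) (Fin (n + 1)) ℝ}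
    (hM : DualL1Separated M) {j : Fin (n + 1)} (hj0 : M j 0 ≠ 0) (hj : ∀ i, |M i 0| ≤ |M j 0|) :
    DualL1Separated ((2 : ℝ)⁻¹ • eliminate M j) := by
  -- A dual vector `v` of the projected lattice lifts to the dual vector `j.insertNth lift v` of
  -- `M ℤⁿ⁺¹`; maximality of the pivot gives `|lift| ≤ ‖v‖₁`.
  intro u hu z hz
  set v := (2 : ℝ)⁻¹ • u
  set lift := -(∑ r, v r * M (j.succAbove r) 0) / M j 0
  have hlift : |lift| ≤ ∑ r, |v r| := by
    rw [abs_div, abs_neg, div_le_iff₀ (abs_pos.mpr hj0), Finset.sum_mul]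
    refine (Finset.abs_sum_le_sum_abs _ _).trans (Finset.sum_le_sum fun r _ => ?_)
    rw [abs_mul]
    exact mul_le_mul_of_nonneg_left (hj _) (abs_nonneg _)
  have hv : ∑ r, |v r| = 2⁻¹ * ∑ r, |u r| := by simp [v, abs_mul, Finset.mul_sum]
  have hv0 : (j.insertNth lift v : Fin (n + 1) → ℝ) ≠ 0 := by
    intro h
    refine hu (funext fun r => ?_)
    simpa [v] using congrFun h (j.succAbove r)
  have h := hM _ hv0 (Fin.cons 0 z) (by
    rw [insertNth_vecMul_eq_cons hj0, smul_vecMul, ← vecMul_smul, hz]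
    ext c
    refine Fin.cases ?_ (fun c => ?_) c <;> simp)
  rw [Fin.sum_univ_succAbove _ j] at h
  simp only [Fin.insertNth_apply_same, Fin.insertNth_apply_succAbove] at h
  linarith

theorem exists_abs_mulVec_cons_sub_le {M : Matrix (Fin (n + 1)) (Fin (n + 1)) ℝ}
    {j : Fin (n + 1)} (hj0 : M j 0 ≠ 0) (hj : ∀ i, |M i 0| ≤ |M j 0|) (x : Fin (n + 1) → ℝ)
    (m : Fin n → ℤ) {ε : ℝ} (hε : 0 ≤ ε)
    (hm : ∀ r,
      |(eliminate M j *ᵥ fun c => (m c : ℝ)) r - projectAlong (fun i => M i 0) j x r| ≤ ε) :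
    ∃ k : ℤ, ∀ i, |(M *ᵥ Fin.cons (k : ℝ) fun c => (m c : ℝ)) i - x i| ≤ ε + |M j 0| / 2 := by
  set y : ℝ → Fin (n + 1) → ℝ := fun t => M *ᵥ Fin.cons t fun c => (m c : ℝ)
  have hy : ∀ t, y t j = t * M j 0 + y 0 j := by
    intro t
    simp [y, mulVec_apply_eq_sum, Fin.sum_univ_succ, mul_comm]
  set k := round ((x j - y 0 j) / M j 0)
  have hyj : |y k j - x j| ≤ |M j 0| / 2 := by
    have : y k j - x j = (k - (x j - y 0 j) / M j 0) * M j 0 := by rw [hy]; field_simp; ring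
    rw [this, abs_mul, abs_sub_comm]
    linarith [mul_le_mul_of_nonneg_right (abs_sub_round ((x j - y 0 j) / M j 0))
      (abs_nonneg (M j 0))]
  refine ⟨k, fun i => ?_⟩
  rcases Fin.eq_self_or_eq_succAbove j i with rfl | ⟨r, rfl⟩
  · linarith
  have hsplit : y k (j.succAbove r) - x (j.succAbove r) =
      (projectAlong (fun i => M i 0) j (y k) r - projectAlong (fun i => M i 0) j x r) +
        M (j.succAbove r) 0 / M j 0 * (y k j - x j) := by
    simp only [projectAlong]
    ring
  have hratio : |M (j.succAbove r) 0 / M j 0| ≤ 1 := by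
    rw [abs_div, div_le_one (abs_pos.mpr hj0)]
    exact hj _
  rw [projectAlong_mulVec_cons hj0] at hsplit
  change |y k (j.succAbove r) - x (j.succAbove r)| ≤ _
  rw [hsplit]
  refine (abs_add_le _ _).trans (add_le_add (hm r) ?_)
  rw [abs_mul]
  exact (mul_le_of_le_one_left (abs_nonneg _) hratio).trans hyj

end Elimination

theorem DualL1Separated.exists_short_first_column {n : ℕ}
    {B : Matrix (Fin (n + 1)) (Fin (n + 1)) ℝ} (hB : DualL1Separated B) :
    ∃ M : Matrix (Fin (n + 1)) (Fin (n + 1)) ℝ, DualL1Separated M ∧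
      (∀ i, |M i 0| ≤ 3 * (n + 1 : ℕ)) ∧
      ∀ q : Fin (n + 1) → ℤ, ∃ m : Fin (n + 1) → ℤ,
        (M *ᵥ fun k => (q k : ℝ)) = B *ᵥ fun k => (m k : ℝ) := by
  obtain ⟨m, hm0, hm⟩ := hB.exists_ne_zero_abs_mulVec_le n.succ_pos
  obtain ⟨b, g, rfl⟩ := (Pi.basisFun ℤ (Fin (n + 1))).exists_basis_eq_smul hm0 0
  set U := (Pi.basisFun ℤ (Fin (n + 1))).toMatrix b
  have hcast : ∀ q : Fin (n + 1) → ℤ,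
      (U.map (↑) *ᵥ fun k => (q k : ℝ)) = fun k => ((U *ᵥ q) k : ℝ) :=
    fun q => funext fun k => (RingHom.map_mulVec (Int.castRingHom ℝ) U q k).symm
  refine ⟨B * U.map (↑), hB.mul_map_intCast (Module.Basis.toMatrix_mul_toMatrix_flip _ _),
    fun i => ?_, fun q => ⟨U *ᵥ q, by rw [← mulVec_mulVec, hcast]⟩⟩
  have hcol : (B * U.map (Int.cast : ℤ → ℝ)) i 0 = (B *ᵥ fun k => (b 0 k : ℝ)) i := by
    simp [U, mul_apply, mulVec_apply_eq_sum, Module.Basis.toMatrix_apply]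
  have hg : (1 : ℝ) ≤ |(g : ℝ)| := by
    have : g ≠ 0 := by rintro rfl; simp at hm0
    exact_mod_cast Int.one_le_abs this
  have hBm : (B *ᵥ fun k => ((g • b 0) k : ℝ)) = (g : ℝ) • B *ᵥ fun k => (b 0 k : ℝ) := by
    rw [← mulVec_smul]
    congr 1
    ext k
    simp
  have hi := hm i
  rw [hBm, Pi.smul_apply, smul_eq_mul, abs_mul] at hi
  rw [hcol]
  nlinarith [abs_nonneg ((B *ᵥ fun k => (b 0 k : ℝ)) i)]

/-- Each induction step doubles the radius for the projected lattice and adds at most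
`3 (n + 1) / 2` for the rounding along a basis vector of `ℓ∞`-norm at most `3 (n + 1)`. -/
noncomputable def coveringConst : ℕ → ℝ
  | 0 => 0
  | n + 1 => 2 * coveringConst n + 3 * (n + 1)

theorem coveringConst_nonneg (n : ℕ) : 0 ≤ coveringConst n := by
  induction n with
  | zero => simp [coveringConst]
  | succ n ih => simp only [coveringConst]; positivity

theorem DualL1Separated.exists_abs_mulVec_sub_le {n : ℕ} {B : Matrix (Fin n) (Fin n) ℝ}
    (hB : DualL1Separated B) (x : Fin n → ℝ) :
    ∃ m : Fin n → ℤ, ∀ i, |(B *ᵥ fun k => (m k : ℝ)) i - x i| ≤ coveringConst n := by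
  induction n with
  | zero => exact ⟨0, fun i => i.elim0⟩
  | succ n ih =>
    obtain ⟨M, hM, hMcol, hMB⟩ := hB.exists_short_first_column
    obtain ⟨j, hj⟩ := Finite.exists_max fun i => |M i 0|
    have hj0 : M j 0 ≠ 0 := fun h => hM.det_ne_zero <|
      det_eq_zero_of_column_eq_zero 0 fun i => abs_nonpos_iff.mp (by simpa [h] using hj i)
    obtain ⟨m', hm'⟩ :=
      ih (hM.eliminate hj0 hj) ((2 : ℝ)⁻¹ • projectAlong (fun i => M i 0) j x)
    obtain ⟨k, hk⟩ := exists_abs_mulVec_cons_sub_le hj0 hj x m'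
      (mul_nonneg zero_le_two (coveringConst_nonneg n)) fun r => by
        have := hm' r
        rw [smul_mulVec, Pi.smul_apply, Pi.smul_apply, smul_eq_mul, smul_eq_mul, ← mul_sub,
          abs_mul, abs_inv, abs_two] at this
        linarith
    obtain ⟨m, hm⟩ := hMB (Fin.cons k m')
    refine ⟨m, fun i => ?_⟩
    rw [← hm, show (fun c => ((Fin.cons k m' : Fin (n + 1) → ℤ) c : ℝ)) =
      Fin.cons (k : ℝ) fun c => (m' c : ℝ) from Fin.comp_cons _ _ _]
    have := hMcol j
    push_cast at this
    simp only [coveringConst]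
    linarith [hk i, abs_nonneg (M j 0)]

theorem exists_mulVec_mem_Ico {n : ℕ} (R : Matrix (Fin n) (Fin n) ℝ) {κ : ℝ}
    (hκ : coveringConst n < κ) (l : Fin n → ℝ) (hl : ∀ i, 0 < l i)
    (hR : ∀ w : Fin n → ℝ, w ≠ 0 → ∀ z : Fin n → ℤ, (w ᵥ* R = fun k => (z k : ℝ)) →
      2 * κ ≤ ∑ i, l i * |w i|)
    (x : Fin n → ℝ) :
    ∃ m : Fin n → ℤ, ∀ i,
      x i ≤ (R *ᵥ fun k => (m k : ℝ)) i ∧ (R *ᵥ fun k => (m k : ℝ)) i < x i + l i := by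
  have hκ0 : 0 < κ := (coveringConst_nonneg n).trans_lt hκ
  -- rescaling coordinate `i` by `s i` turns the box into a cube of half-width `κ`
  set s : Fin n → ℝ := fun i => 2 * κ / l i
  have hs : ∀ i, 0 < s i := fun i => div_pos (by positivity) (hl i)
  have hB : DualL1Separated (diagonal s * R) := by
    intro u hu z hz
    have hw : u ᵥ* diagonal s ≠ 0 := fun h => hu <| funext fun i => by
      simpa [vecMul_diagonal, (hs i).ne'] using congrFun h i
    have h := hR _ hw z (by rw [vecMul_vecMul, hz])
    have hsum : ∑ i, l i * |(u ᵥ* diagonal s) i| = 2 * κ * ∑ i, |u i| := by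
      rw [Finset.mul_sum]
      refine Finset.sum_congr rfl fun i _ => ?_
      rw [vecMul_diagonal, abs_mul, abs_of_pos (hs i)]
      simp only [s]
      field_simp [(hl i).ne']
    rw [hsum] at h
    nlinarith
  obtain ⟨m, hm⟩ := hB.exists_abs_mulVec_sub_le fun i => s i * (x i + l i / 2)
  refine ⟨m, fun i => ?_⟩
  have hi := (hm i).trans_lt hκ
  rw [← mulVec_mulVec, mulVec_diagonal, ← mul_sub, abs_mul, abs_of_pos (hs i),
    ← lt_div_iff₀' (hs i), abs_lt] at hi
  have : κ / s i = l i / 2 := by simp only [s]; field_simp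
  constructor <;> linarith

theorem Finset.exists_le_of_pow_card_le_prod {ι : Type*} {s : Finset ι} {f : ι → ℝ} {c : ℝ}
    (hs : s.Nonempty) (hf : ∀ i ∈ s, 0 ≤ f i) (h : c ^ s.card ≤ ∏ i ∈ s, f i) :
    ∃ i ∈ s, c ≤ f i := by
  obtain ⟨i, hi, hmax⟩ := s.exists_max_image f hs
  refine ⟨i, hi, not_lt.mp fun hlt => h.not_gt ?_⟩
  calc ∏ j ∈ s, f j ≤ ∏ _j ∈ s, f i := Finset.prod_le_prod hf hmax
    _ = f i ^ s.card := Finset.prod_const _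
    _ < c ^ s.card := pow_lt_pow_left₀ hlt (hf i hi) hs.card_pos.ne'

theorem eq_smul_mulVec_of_vecMul_smul_inv_transpose {d : ℕ} {A : Matrix (Fin d) (Fin d) ℝ}
    (hA : IsUnit A.det) {a : ℝ} (ha : a ≠ 0) {w z : Fin d → ℝ} (h : w ᵥ* (a⁻¹ • (A⁻¹)ᵀ) = z) :
    w = a • (A *ᵥ z) := by
  rw [vecMul_smul, vecMul_transpose, inv_smul_eq_iff₀ ha] at h
  rw [← mulVec_smul, ← h, mulVec_mulVec, mul_nonsing_inv _ hA, one_mulVec]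

theorem le_sum_mul_abs_of_vecMul_smul_inv_transpose {d : ℕ} {A : Matrix (Fin d) (Fin d) ℝ}
    (hA : IsUnit A.det)
    (h1 : ∀ m : Fin d → ℤ, m ≠ 0 → 1 ≤ |∏ j, A.mulVec (fun i => (m i : ℝ)) j|)
    {a c : ℝ} (ha : 0 < a) {l : Fin d → ℝ} (hl : ∀ i, 0 ≤ l i) (hc : c ^ d ≤ a ^ d * ∏ i, l i)
    {w : Fin d → ℝ} (hw : w ≠ 0) {z : Fin d → ℤ}
    (hz : w ᵥ* (a⁻¹ • (A⁻¹)ᵀ) = fun k => (z k : ℝ)) :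
    c ≤ ∑ i, l i * |w i| := by
  have hwz := eq_smul_mulVec_of_vecMul_smul_inv_transpose hA ha.ne' hz
  have hz0 : z ≠ 0 := by
    rintro rfl
    exact hw (hwz.trans (funext fun i => by simp [mulVec_apply_eq_sum]))
  have hprod : c ^ (Finset.univ : Finset (Fin d)).card ≤ ∏ i, l i * |w i| := by
    rw [Finset.card_univ, Fintype.card_fin, Finset.prod_mul_distrib, hwz]
    simp only [Pi.smul_apply, smul_eq_mul, abs_mul, abs_of_pos ha, Finset.prod_mul_distrib,
      Finset.prod_const, Finset.card_univ, Fintype.card_fin, ← Finset.abs_prod]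
    have hl' : 0 ≤ a ^ d * ∏ i, l i := by
      have : 0 ≤ ∏ i, l i := Finset.prod_nonneg fun i _ => hl i
      positivity
    calc c ^ d ≤ a ^ d * ∏ i, l i := hc
      _ ≤ (a ^ d * ∏ i, l i) * |∏ i, (A *ᵥ fun k => (z k : ℝ)) i| :=
        le_mul_of_one_le_right hl' (h1 z hz0)
      _ = _ := by ring
  obtain ⟨i₀, -⟩ := Function.ne_iff.mp hz0
  obtain ⟨i, -, hi⟩ := Finset.exists_le_of_pow_card_le_prod ⟨i₀, Finset.mem_univ _⟩
    (fun i _ => mul_nonneg (hl i) (abs_nonneg _)) hprod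
  exact hi.trans (Finset.single_le_sum (fun j _ => mul_nonneg (hl j) (abs_nonneg _))
    (Finset.mem_univ i))

theorem statement13 (d : ℕ) (A : Matrix (Fin d) (Fin d) ℝ)
    (hA : IsUnit A.det)
    (h1 : ∀ m : Fin d → ℤ, m ≠ 0 → 1 ≤ |∏ j, A.mulVec (fun i => (m i : ℝ)) j|) :
    ∃ C : ℝ, 0 < C ∧ ∀ a : ℝ, 1 < a →
      disp d (FrolovSet d a A) ≤ C / a ^ d := by
  have hK := coveringConst_nonneg d
  refine ⟨(2 * (coveringConst d + 1)) ^ d, by positivity, fun a ha => ?_⟩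
  have ha0 : 0 < a := by linarith
  refine Real.sSup_le ?_ (by positivity)
  rintro _ ⟨x, y, hxy, hempty, rfl⟩
  by_contra! hvol
  have hl : ∀ j, 0 < (y - x) j := fun j => (sub_nonneg.mpr (hxy j).2.1).lt_of_ne' <|
    Finset.prod_ne_zero_iff.mp (hvol.trans_le' (by positivity)).ne' j (Finset.mem_univ j)
  obtain ⟨m, hm⟩ := exists_mulVec_mem_Ico (a⁻¹ • (A⁻¹)ᵀ) (lt_add_one _) (y - x) hl
    (fun w hw z hz => le_sum_mul_abs_of_vecMul_smul_inv_transpose hA h1 ha0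
      (fun j => (hl j).le) ((div_lt_iff₀' (by positivity)).mp hvol).le hw hz) x
  rw [smul_mulVec] at hm
  obtain ⟨j, hj⟩ := hempty _ ⟨⟨m, rfl⟩, fun j =>
    ⟨(hxy j).1.trans (hm j).1, (hm j).2.le.trans (by simp [(hxy j).2.2])⟩⟩
  have hmj := hm j
  simp only [Pi.sub_apply, add_sub_cancel] at hmj
  rcases hj with hj | hj <;> linarith [hmj.1, hmj.2]
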